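/- Let B_0, B_1, …, B_n (n ≥ 1) be random vectors forming a path in a Bayes linear tree, i.e. Cov_{B_k}(B_0, B_{k+1}) = 0 for every k with 1 ≤ k ≤ n−1, where each subscripted operator uses the Moore–Penrose inverse of the corresponding variance matrix. Then the projection from the root propagates along the path: P_{B_0}(B_n) = P_{B_{n−1}}(B_n)·P_{B_{n−2}}(B_{n−1})·…·P_{B_1}(B_2)·P_{B_0}(B_1). -/

import Mathlib

/-! The adjusted covariance has the closed form `Cov_D(B,C) = Cov(B,C) − Cov(B,D)·W·Cov(D,C)`:
expand by bilinearity and use `W·Var(D)·W = W` together with `Wᵀ = W` (a Moore–Penrose inverse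
of a symmetric matrix is symmetric, by uniqueness). The path condition at `k` therefore reads
`Cov(B_{k+1},B_0) = P_{B_k}(B_{k+1})·Cov(B_k,B_0)`, and the product formula follows by induction
on `n` after multiplying by `W_0`. -/

open MeasureTheory Matrix

variable {Ω : Type*}

/-- The covariance matrix of two random vectors `B` (dimension `m`) and `D` (dimension `n`):
the `(i,j)` entry is `E[Bᵢ·Dⱼ] − E[Bᵢ]·E[Dⱼ]`. -/
noncomputable def cov [MeasurableSpace Ω] (μ : Measure Ω) {m n : ℕ}
    (B : Fin m → Ω → ℝ) (D : Fin n → Ω → ℝ) : Matrix (Fin m) (Fin n) ℝ :=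
  Matrix.of fun i j =>
    (∫ ω, B i ω * D j ω ∂μ) - (∫ ω, B i ω ∂μ) * (∫ ω, D j ω ∂μ)

/-- `W` is a Moore–Penrose inverse of `V`. -/
def IsMoorePenrose {m n : ℕ} (V : Matrix (Fin m) (Fin n) ℝ)
    (W : Matrix (Fin n) (Fin m) ℝ) : Prop :=
  V * W * V = V ∧ W * V * W = W ∧ (V * W)ᵀ = V * W ∧ (W * V)ᵀ = W * V

/-- The adjusted expectation `E_D(B)` (computed with the matrix `W`, intended to be the
Moore–Penrose inverse of `Var(D)`): the `i`-th component is
`E[Bᵢ] + Σ_j (Cov(B,D)·W)_{ij}·(Dⱼ − E[Dⱼ])`. -/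
noncomputable def adjExp [MeasurableSpace Ω] (μ : Measure Ω) {m n : ℕ}
    (B : Fin m → Ω → ℝ) (D : Fin n → Ω → ℝ)
    (W : Matrix (Fin n) (Fin n) ℝ) : Fin m → Ω → ℝ :=
  fun i ω => (∫ ω', B i ω' ∂μ) + ∑ j, (cov μ B D * W) i j * (D j ω - ∫ ω', D j ω' ∂μ)

/-- The adjusted covariance `Cov_D(B,C) = Cov(B − E_D(B), C − E_D(C))`. -/
noncomputable def adjCov [MeasurableSpace Ω] (μ : Measure Ω) {m p n : ℕ}
    (B : Fin m → Ω → ℝ) (C : Fin p → Ω → ℝ) (D : Fin n → Ω → ℝ)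
    (W : Matrix (Fin n) (Fin n) ℝ) : Matrix (Fin m) (Fin p) ℝ :=
  cov μ (fun i ω => B i ω - adjExp μ B D W i ω) (fun j ω => C j ω - adjExp μ C D W j ω)

/-- The composite projection `P_{B_{n−1}}(B_n)·P_{B_{n−2}}(B_{n−1})·…·P_{B_1}(B_2)·P_{B_0}(B_1)`
along the path `B_0, B_1, …, B_n`, where `P_{B_k}(B_{k+1}) = Cov(B_{k+1},B_k)·W_k`. -/
noncomputable def pathProj [MeasurableSpace Ω] (μ : Measure Ω) {d : ℕ → ℕ}
    (B : (k : ℕ) → Fin (d k) → Ω → ℝ)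
    (W : (k : ℕ) → Matrix (Fin (d k)) (Fin (d k)) ℝ) :
    (n : ℕ) → Matrix (Fin (d n)) (Fin (d 0)) ℝ
  | 0 => 1
  | n + 1 => (cov μ (B (n + 1)) (B n) * W n) * pathProj μ B W n

open ProbabilityTheory

namespace IsMoorePenrose

variable {m n : ℕ} {V : Matrix (Fin m) (Fin n) ℝ} {W : Matrix (Fin n) (Fin m) ℝ}

theorem transpose (h : IsMoorePenrose V W) : IsMoorePenrose Vᵀ Wᵀ := by
  obtain ⟨hVWV, hWVW, hVW, hWV⟩ := h
  refine ⟨?_, ?_, ?_, ?_⟩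
  · rw [← transpose_mul, ← transpose_mul, ← Matrix.mul_assoc, hVWV]
  · rw [← transpose_mul, ← transpose_mul, ← Matrix.mul_assoc, hWVW]
  · rw [← transpose_mul, hWV, hWV]
  · rw [← transpose_mul, hVW, hVW]

theorem unique {W' : Matrix (Fin n) (Fin m) ℝ} (h : IsMoorePenrose V W)
    (h' : IsMoorePenrose V W') : W = W' := by
  obtain ⟨hVWV, hWVW, hVW, hWV⟩ := h
  obtain ⟨hVW'V, hW'VW', hVW', hW'V⟩ := h'
  have hleft : V * W = V * W' :=
    calc V * W = (V * W)ᵀ := hVW.symm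
      _ = ((V * W') * (V * W))ᵀ := by rw [← Matrix.mul_assoc, hVW'V]
      _ = (V * W) * (V * W') := by rw [transpose_mul, hVW, hVW']
      _ = V * W' := by rw [← Matrix.mul_assoc, hVWV]
  have hright : W * V = W' * V :=
    calc W * V = (W * V)ᵀ := hWV.symm
      _ = ((W * V) * (W' * V))ᵀ := by rw [Matrix.mul_assoc W, ← Matrix.mul_assoc V, hVW'V]
      _ = (W' * V) * (W * V) := by rw [transpose_mul, hWV, hW'V]
      _ = W' * V := by rw [Matrix.mul_assoc W', ← Matrix.mul_assoc V, hVWV]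
  calc W = W * V * W := hWVW.symm
    _ = W' * V * W' := by rw [hright, Matrix.mul_assoc, hleft, ← Matrix.mul_assoc]
    _ = W' := hW'VW'

theorem transpose_eq_self {V : Matrix (Fin n) (Fin n) ℝ} {W : Matrix (Fin n) (Fin n) ℝ}
    (hV : Vᵀ = V) (h : IsMoorePenrose V W) : Wᵀ = W :=
  (hV ▸ h.transpose).unique h

end IsMoorePenrose

section Covariance

variable [MeasurableSpace Ω] {μ : Measure Ω} {m n p : ℕ}

theorem cov_transpose (B : Fin m → Ω → ℝ) (D : Fin n → Ω → ℝ) :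
    (cov μ B D)ᵀ = cov μ D B := by
  ext i j
  simp [cov, mul_comm]

variable [IsProbabilityMeasure μ]

theorem cov_apply_eq_covariance {B : Fin m → Ω → ℝ} {D : Fin n → Ω → ℝ}
    (hB : ∀ i, MemLp (B i) 2 μ) (hD : ∀ j, MemLp (D j) 2 μ) (i : Fin m) (j : Fin n) :
    cov μ B D i j = covariance (B i) (D j) μ := by
  simp only [covariance_eq_sub (hB i) (hD j), cov, of_apply, Pi.mul_apply]

theorem memLp_adjExp (B : Fin m → Ω → ℝ) {D : Fin n → Ω → ℝ} (W : Matrix (Fin n) (Fin n) ℝ)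
    (hD : ∀ j, MemLp (D j) 2 μ) (i : Fin m) : MemLp (adjExp μ B D W i) 2 μ := by
  have hcentred (j : Fin n) : MemLp (fun ω ↦ D j ω - ∫ ω', D j ω' ∂μ) 2 μ :=
    (hD j).sub (memLp_const _)
  have hsum := memLp_finsetSum Finset.univ fun j _ ↦ (hcentred j).const_mul ((cov μ B D * W) i j)
  exact (memLp_const (∫ ω, B i ω ∂μ)).add hsum

theorem cov_adjExp_left (B : Fin m → Ω → ℝ) {D : Fin n → Ω → ℝ} {Z : Fin p → Ω → ℝ}
    (W : Matrix (Fin n) (Fin n) ℝ) (hD : ∀ j, MemLp (D j) 2 μ) (hZ : ∀ l, MemLp (Z l) 2 μ) :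
    cov μ (adjExp μ B D W) Z = cov μ B D * W * cov μ D Z := by
  ext i l
  have hcentred (j : Fin n) : MemLp (fun ω ↦ D j ω - ∫ ω', D j ω' ∂μ) 2 μ :=
    (hD j).sub (memLp_const _)
  rw [cov_apply_eq_covariance (memLp_adjExp B W hD) hZ]
  unfold adjExp
  rw [Matrix.mul_apply,
    covariance_const_add_left ((memLp_finsetSum _ fun j _ ↦ (hcentred j).const_mul _).integrable
      one_le_two),
    covariance_fun_sum_left (fun j ↦ (hcentred j).const_mul _) (hZ l)]
  refine Finset.sum_congr rfl fun j _ ↦ ?_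
  rw [covariance_const_mul_left, covariance_sub_const_left ((hD j).integrable one_le_two),
    cov_apply_eq_covariance hD hZ]

theorem cov_sub_left {X Y : Fin m → Ω → ℝ} {Z : Fin p → Ω → ℝ}
    (hX : ∀ i, MemLp (X i) 2 μ) (hY : ∀ i, MemLp (Y i) 2 μ) (hZ : ∀ l, MemLp (Z l) 2 μ) :
    cov μ (fun i ω ↦ X i ω - Y i ω) Z = cov μ X Z - cov μ Y Z := by
  ext i l
  rw [cov_apply_eq_covariance (B := fun i ω ↦ X i ω - Y i ω) (fun i ↦ (hX i).sub (hY i)) hZ,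
    Matrix.sub_apply, cov_apply_eq_covariance hX hZ, cov_apply_eq_covariance hY hZ,
    covariance_fun_sub_left (hX i) (hY i) (hZ l)]

theorem cov_sub_adjExp_left {B : Fin m → Ω → ℝ} {D : Fin n → Ω → ℝ} {Z : Fin p → Ω → ℝ}
    (W : Matrix (Fin n) (Fin n) ℝ) (hB : ∀ i, MemLp (B i) 2 μ) (hD : ∀ j, MemLp (D j) 2 μ)
    (hZ : ∀ l, MemLp (Z l) 2 μ) :
    cov μ (fun i ω ↦ B i ω - adjExp μ B D W i ω) Z = cov μ B Z - cov μ B D * W * cov μ D Z := by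
  rw [cov_sub_left hB (memLp_adjExp B W hD) hZ, cov_adjExp_left B W hD hZ]

theorem cov_sub_adjExp_right {C : Fin p → Ω → ℝ} {D : Fin n → Ω → ℝ} {Z : Fin m → Ω → ℝ}
    (W : Matrix (Fin n) (Fin n) ℝ) (hC : ∀ i, MemLp (C i) 2 μ) (hD : ∀ j, MemLp (D j) 2 μ)
    (hZ : ∀ l, MemLp (Z l) 2 μ) :
    cov μ Z (fun i ω ↦ C i ω - adjExp μ C D W i ω) = cov μ Z C - cov μ Z D * Wᵀ * cov μ D C := by
  rw [← cov_transpose, cov_sub_adjExp_left W hC hD hZ]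
  simp only [transpose_sub, transpose_mul, cov_transpose, Matrix.mul_assoc]

theorem adjCov_eq {B : Fin m → Ω → ℝ} {C : Fin p → Ω → ℝ} {D : Fin n → Ω → ℝ}
    {W : Matrix (Fin n) (Fin n) ℝ} (hW : IsMoorePenrose (cov μ D D) W)
    (hB : ∀ i, MemLp (B i) 2 μ) (hC : ∀ i, MemLp (C i) 2 μ) (hD : ∀ j, MemLp (D j) 2 μ) :
    adjCov μ B C D W = cov μ B C - cov μ B D * W * cov μ D C := by
  have hresC (j : Fin p) : MemLp (fun ω ↦ C j ω - adjExp μ C D W j ω) 2 μ :=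
    (hC j).sub (memLp_adjExp C W hD j)
  have hcollapse : cov μ B D * W * (cov μ D D * W * cov μ D C) = cov μ B D * W * cov μ D C :=
    calc _ = cov μ B D * (W * cov μ D D * W) * cov μ D C := by simp only [Matrix.mul_assoc]
      _ = _ := by rw [hW.2.1]
  rw [adjCov, cov_sub_adjExp_left W hB hD hresC, cov_sub_adjExp_right W hC hD hB,
    cov_sub_adjExp_right W hC hD hD, hW.transpose_eq_self (cov_transpose D D), Matrix.mul_sub,
    hcollapse, sub_self, sub_zero]

theorem cov_eq_of_adjCov_eq_zero {B : Fin m → Ω → ℝ} {C : Fin p → Ω → ℝ} {D : Fin n → Ω → ℝ}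
    {W : Matrix (Fin n) (Fin n) ℝ} (hW : IsMoorePenrose (cov μ D D) W)
    (hB : ∀ i, MemLp (B i) 2 μ) (hC : ∀ i, MemLp (C i) 2 μ) (hD : ∀ j, MemLp (D j) 2 μ)
    (h : adjCov μ B C D W = 0) :
    cov μ C B = cov μ C D * W * cov μ D B := by
  rw [adjCov_eq hW hB hC hD, sub_eq_zero] at h
  rw [← cov_transpose B C, h]
  simp only [transpose_mul, cov_transpose, hW.transpose_eq_self (cov_transpose D D),
    Matrix.mul_assoc]

end Covariance

/-- if `B_0, …, B_n` (`n ≥ 1`) form a path in a Bayes linear tree, i.e.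
`Cov_{B_k}(B_0, B_{k+1}) = 0` for `1 ≤ k ≤ n−1`, then
`P_{B_0}(B_n) = P_{B_{n−1}}(B_n)·…·P_{B_1}(B_2)·P_{B_0}(B_1)`. -/
theorem proj_propagates_along_path [MeasurableSpace Ω] (μ : Measure Ω)
    [IsProbabilityMeasure μ] {d : ℕ → ℕ} (B : (k : ℕ) → Fin (d k) → Ω → ℝ)
    (hB : ∀ k i, Measurable (B k i) ∧ MemLp (B k i) 2 μ)
    (W : (k : ℕ) → Matrix (Fin (d k)) (Fin (d k)) ℝ)
    (hW : ∀ k, IsMoorePenrose (cov μ (B k) (B k)) (W k))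
    (n : ℕ) (hn : 1 ≤ n)
    (hpath : ∀ k, 1 ≤ k → k ≤ n - 1 → adjCov μ (B 0) (B (k + 1)) (B k) (W k) = 0) :
    cov μ (B n) (B 0) * W 0 = pathProj μ B W n := by
  have hL2 (k : ℕ) (i : Fin (d k)) : MemLp (B k i) 2 μ := (hB k i).2
  induction n, hn using Nat.le_induction with
  | base => simp [pathProj]
  | succ n hn ih =>
    have hstep := cov_eq_of_adjCov_eq_zero (hW n) (hL2 0) (hL2 (n + 1)) (hL2 n)
      (hpath n hn (by omega))
    rw [pathProj, ← ih fun k hk hkn ↦ hpath k hk (by omega), hstep, Matrix.mul_assoc]
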